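/- An element b of a metric space (X,d) is compact if and only if for every r ∈ [0,∞], the map x ↦ r ⊖ d(b,x) is a Scott weight of (X,d). -/

import Mathlib

open ENNReal

universe u

structure GMetric (X : Type u) where
  d : X → X → ℝ≥0∞
  refl : ∀ x, d x x = 0
  triangle : ∀ x y z, d x z ≤ d x y + d y z

variable {X : Type u}

/-- Weight of a generalized metric space. -/
def IsWeight (m : GMetric X) (φ : X → ℝ≥0∞) : Prop := ∀ x y, φ x ≤ φ y + m.d x y

/-- Coweight of a generalized metric space. -/
def IsCoweight (m : GMetric X) (ψ : X → ℝ≥0∞) : Prop := ∀ x y, ψ y ≤ ψ x + m.d x y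

/-- The metric on weights: d̄(φ,ψ) = sup_x (ψ x ⊖ φ x). -/
noncomputable def dbar (φ ψ : X → ℝ≥0∞) : ℝ≥0∞ := ⨆ x, ψ x - φ x

/-- A directed index: nonempty, preordered and directed. -/
def DirIdx {ι : Type*} (le : ι → ι → Prop) : Prop :=
  Nonempty ι ∧ Reflexive le ∧ Transitive le ∧ ∀ i j, ∃ k, le i k ∧ le j k

/-- Forward Cauchy net. -/
def ForwardCauchy {ι : Type*} (m : GMetric X) (le : ι → ι → Prop) (x : ι → X) : Prop :=
  DirIdx le ∧ (⨅ i, ⨆ j, ⨆ (_ : le i j), ⨆ k, ⨆ (_ : le j k), m.d (x j) (x k)) = 0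

/-- Yoneda limit of a net. -/
def YonedaLimit {ι : Type*} (m : GMetric X) (le : ι → ι → Prop) (x : ι → X) (a : X) : Prop :=
  ∀ y, m.d a y = ⨅ i, ⨆ j, ⨆ (_ : le i j), m.d (x j) y

/-- Scott weight. -/
def ScottWeight (m : GMetric X) (φ : X → ℝ≥0∞) : Prop :=
  IsWeight m φ ∧ ∀ (ι : Type u) (le : ι → ι → Prop) (x : ι → X) (a : X),
    ForwardCauchy m le x → YonedaLimit m le x a →
    φ a ≤ ⨅ i, ⨆ j, ⨆ (_ : le i j), φ (x j)

/-- The Scott approach distance. -/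
noncomputable def scottDist (m : GMetric X) (x : X) (A : Set X) : ℝ≥0∞ :=
  ⨆ (φ : X → ℝ≥0∞) (_ : ScottWeight m φ ∧ ∀ a ∈ A, φ a = 0), φ x

/-- Tensor product of a weight and a coweight. -/
noncomputable def tensor (φ ψ : X → ℝ≥0∞) : ℝ≥0∞ := ⨅ x, φ x + ψ x

/-- Flat weight. -/
def FlatWeight (m : GMetric X) (φ : X → ℝ≥0∞) : Prop :=
  IsWeight m φ ∧ (⨅ x, φ x) = 0 ∧
  ∀ ψ₁ ψ₂, IsCoweight m ψ₁ → IsCoweight m ψ₂ →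
    tensor φ (fun x => max (ψ₁ x) (ψ₂ x)) = max (tensor φ ψ₁) (tensor φ ψ₂)

/-- Colimit of a weight. -/
def IsColimit (m : GMetric X) (φ : X → ℝ≥0∞) (a : X) : Prop :=
  ∀ y, dbar φ (fun z => m.d z y) = m.d a y

/-- Compact element. -/
def IsCompactElem (m : GMetric X) (a : X) : Prop :=
  ∀ (ι : Type u) (le : ι → ι → Prop) (x : ι → X) (b : X),
    ForwardCauchy m le x → YonedaLimit m le x b →
    m.d a b = ⨅ i, ⨆ j, ⨆ (_ : le i j), m.d a (x j)

/-- Approach space axioms. -/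
def A1 (δ : X → Set X → ℝ≥0∞) : Prop := ∀ x, δ x {x} = 0
def A2 (δ : X → Set X → ℝ≥0∞) : Prop := ∀ x, δ x (∅ : Set X) = ∞
def A3 (δ : X → Set X → ℝ≥0∞) : Prop := ∀ x A B, δ x (A ∪ B) = min (δ x A) (δ x B)
def A4 (δ : X → Set X → ℝ≥0∞) : Prop := ∀ x A B, δ x A ≤ δ x B + ⨆ b ∈ B, δ b A

/-- Regular function of an approach space. -/
def IsRegularFn (δ : X → Set X → ℝ≥0∞) (φ : X → ℝ≥0∞) : Prop :=
  ∀ x A, φ x - (⨆ a ∈ A, φ a) ≤ δ x A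

/-- The Lawvere metric d_L(a,b) = b ⊖ a on [0,∞]. -/
noncomputable def dL : GMetric ℝ≥0∞ where
  d a b := b - a
  refl x := tsub_self x
  triangle x y z := by
    calc z - x ≤ z - y + (y - x) := tsub_le_tsub_add_tsub
    _ = (y - x) + (z - y) := add_comm _ _

/-- The opposite Lawvere metric d_R(a,b) = a ⊖ b on [0,∞]. -/
noncomputable def dR : GMetric ℝ≥0∞ where
  d a b := a - b
  refl x := tsub_self x
  triangle _ _ _ := tsub_le_tsub_add_tsub

/-- Order on formal balls. -/
def ballLE (m : GMetric X) (p q : X × ℝ≥0∞) : Prop := q.2 + m.d p.1 q.1 ≤ p.2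

/-!
For a coweight `ψ` (such as `d(b, -)`) and a forward Cauchy net `x` with Yoneda limit `a`,
`ψ a ≤ limsup ψ (x j) = liminf ψ (x j)`: the inequality comes from the triangle inequality and
`limsup d (x j) a = d a a = 0`, and the two limits agree because `ψ` moves by at most the
Cauchy modulus along the net. So `b` is compact iff `d b a ≥ liminf d b (x j)` for all such nets.
Since `limsup (r ⊖ d b (x j)) = r ⊖ liminf d b (x j)` for finite `r`, the Scott conditions on
`r ⊖ d(b, -)` for all `r < ∞` say the same; the one for `r = ∞` follows from compactness.
-/

noncomputable def netLimsup {ι : Type*} (le : ι → ι → Prop) (f : ι → ℝ≥0∞) : ℝ≥0∞ :=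
  ⨅ i, ⨆ j, ⨆ (_ : le i j), f j

noncomputable def netLiminf {ι : Type*} (le : ι → ι → Prop) (f : ι → ℝ≥0∞) : ℝ≥0∞ :=
  ⨆ i, ⨅ j, ⨅ (_ : le i j), f j

section Net

variable {ι : Type*} {le : ι → ι → Prop}

theorem DirIdx.iInf_le_netLimsup (hle : DirIdx le) (f : ι → ℝ≥0∞) (i : ι) :
    ⨅ j, ⨅ (_ : le i j), f j ≤ netLimsup le f := by
  refine le_iInf fun i' => ?_
  obtain ⟨k, hik, hi'k⟩ := hle.2.2.2 i i'
  exact (iInf₂_le k hik).trans (le_iSup₂ (f := fun j (_ : le i' j) => f j) k hi'k)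

theorem DirIdx.tsub_netLimsup_le (hle : DirIdx le) (f : ι → ℝ≥0∞) (r : ℝ≥0∞) :
    r - netLimsup le f ≤ netLimsup le (fun j => r - f j) := by
  refine le_iInf fun i => ?_
  calc r - netLimsup le f ≤ r - ⨅ j, ⨅ (_ : le i j), f j :=
        tsub_le_tsub_left (hle.iInf_le_netLimsup f i) r
    _ = ⨆ j, ⨆ (_ : le i j), (r - f j) := by simp only [ENNReal.sub_iInf]

theorem netLimsup_const_tsub [Nonempty ι] (f : ι → ℝ≥0∞) {r : ℝ≥0∞} (hr : r ≠ ∞) :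
    netLimsup le (fun j => r - f j) = r - netLiminf le f := by
  simp only [netLimsup, netLiminf, ENNReal.sub_iSup hr, ENNReal.sub_iInf]

end Net

theorem le_of_forall_tsub_le_tsub {a b : ℝ≥0∞} (h : ∀ r ≠ ∞, r - b ≤ r - a) : a ≤ b := by
  by_contra! hba
  obtain ⟨r, hbr, hra⟩ := exists_between hba
  have hr_sub : r - a = 0 := tsub_eq_zero_of_le hra.le
  exact (tsub_pos_of_lt hbr).ne' (le_antisymm ((h r hra.ne_top).trans_eq hr_sub) zero_le)

theorem isCoweight_dist (m : GMetric X) (b : X) : IsCoweight m (m.d b) :=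
  m.triangle b

theorem IsCoweight.const_tsub {m : GMetric X} {ψ : X → ℝ≥0∞} (hψ : IsCoweight m ψ)
    (r : ℝ≥0∞) : IsWeight m (fun x => r - ψ x) := fun x y =>
  calc r - ψ x ≤ r - ψ y + (ψ y - ψ x) := tsub_le_tsub_add_tsub
    _ ≤ r - ψ y + m.d x y := add_le_add_right (tsub_le_iff_left.mpr (hψ x y)) _

section Coweight

variable {m : GMetric X} {ψ : X → ℝ≥0∞} {ι : Type*} {le : ι → ι → Prop} {x : ι → X}

theorem YonedaLimit.le_netLimsup {a : X} (ha : YonedaLimit m le x a) (hle : DirIdx le)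
    (hψ : IsCoweight m ψ) : ψ a ≤ netLimsup le (fun j => ψ (x j)) := by
  refine le_iInf fun i => ?_
  have hconv : ⨅ i', ⨆ j, ⨆ (_ : le i' j), m.d (x j) a = 0 := by rw [← ha a, m.refl]
  suffices ψ a ≤ ⨅ i', (⨆ j, ⨆ (_ : le i j), ψ (x j)) + ⨆ j, ⨆ (_ : le i' j), m.d (x j) a by
    rwa [← ENNReal.add_iInf, hconv, add_zero] at this
  refine le_iInf fun i' => ?_
  obtain ⟨k, hik, hi'k⟩ := hle.2.2.2 i i'
  calc ψ a ≤ ψ (x k) + m.d (x k) a := hψ (x k) a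
    _ ≤ _ := add_le_add (le_iSup₂ (f := fun j (_ : le i j) => ψ (x j)) k hik)
        (le_iSup₂ (f := fun j (_ : le i' j) => m.d (x j) a) k hi'k)

theorem ForwardCauchy.netLimsup_le_netLiminf (hx : ForwardCauchy m le x)
    (hψ : IsCoweight m ψ) :
    netLimsup le (fun j => ψ (x j)) ≤ netLiminf le (fun j => ψ (x j)) := by
  set mod : ι → ℝ≥0∞ := fun i => ⨆ j, ⨆ (_ : le i j), ⨆ k, ⨆ (_ : le j k), m.d (x j) (x k)
  have hsup_le : ∀ i j, le i j → ⨆ k, ⨆ (_ : le j k), ψ (x k) ≤ ψ (x j) + mod i :=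
    fun i j hij => iSup₂_le fun k hjk => (hψ (x j) (x k)).trans (add_le_add_right
      (le_iSup₂_of_le j hij
        (le_iSup₂ (f := fun k (_ : le j k) => m.d (x j) (x k)) k hjk)) _)
  have hstep :
      ∀ i, netLimsup le (fun j => ψ (x j)) ≤ netLiminf le (fun j => ψ (x j)) + mod i := by
    intro i
    rw [← tsub_le_iff_right]
    refine le_iSup_of_le i (le_iInf₂ fun j hij => ?_)
    exact tsub_le_iff_right.mpr ((iInf_le _ j).trans (hsup_le i j hij))
  have := le_iInf hstep
  rwa [← ENNReal.add_iInf, hx.2, add_zero] at this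

end Coweight

/-- An element b is compact iff x ↦ r ⊖ d(b,x) is a Scott weight for every r ∈ [0,∞]. -/
theorem stmt19 (m : GMetric X) (b : X) :
    IsCompactElem m b ↔ ∀ r : ℝ≥0∞, ScottWeight m (fun x => r - m.d b x) := by
  have hψ := isCoweight_dist m b
  constructor
  · intro hb r
    refine ⟨hψ.const_tsub r, fun ι le x a hx ha => ?_⟩
    show r - m.d b a ≤ netLimsup le (fun j => r - m.d b (x j))
    rw [hb ι le x a hx ha]
    exact hx.1.tsub_netLimsup_le _ r
  · intro h ι le x a hx ha
    have : Nonempty ι := hx.1.1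
    refine le_antisymm (ha.le_netLimsup hx.1 hψ) ?_
    calc netLimsup le (fun j => m.d b (x j)) ≤ netLiminf le (fun j => m.d b (x j)) :=
          hx.netLimsup_le_netLiminf hψ
      _ ≤ m.d b a := le_of_forall_tsub_le_tsub fun r hr =>
          ((h r).2 ι le x a hx ha).trans_eq (netLimsup_const_tsub _ hr)
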